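/- For any ρ > 0, the problem instance v†(ρ) defined by μ_{i,m}(v†(ρ)) = i/√ρ for all m ∈ {1,…,M} and i ∈ S_m belongs to P, and its hardness constant satisfies 4ρ/(M K²) ≤ c*(v†(ρ)) ≤ 4Kρ. (Lemma 4 of the paper.) -/

import Mathlib

open Finset
open scoped Classical

namespace HetTS

noncomputable section

variable {K M : ℕ}

/-- Number of clients having access to arm `i`. -/
def Mi (S : Fin M → Finset (Fin K)) (i : Fin K) : ℕ :=
  (Finset.univ.filter fun m => i ∈ S m).card

/-- The mean reward `μ_i(v)` of arm `i`: average of the means of arm `i` across the clients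
having access to it. -/
def armMean (S : Fin M → Finset (Fin K)) (v : Fin M → Fin K → ℝ) (i : Fin K) : ℝ :=
  (1 / (Mi S i : ℝ)) * ∑ m ∈ Finset.univ.filter (fun m => i ∈ S m), v m i

/-- Arm `i` is the (unique) best arm of client `m` under instance `v`. -/
def isBest (S : Fin M → Finset (Fin K)) (v : Fin M → Fin K → ℝ) (m : Fin M) (i : Fin K) :
    Prop :=
  i ∈ S m ∧ ∀ j ∈ S m, j ≠ i → armMean S v j < armMean S v i

/-- The set `P` of problem instances having a unique best arm at each client. -/
def PSet (S : Fin M → Finset (Fin K)) : Set (Fin M → Fin K → ℝ) :=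
  {v | ∀ m, ∃ i, isBest S v m i}

/-- The set of alternative instances `Alt(v)`: instances in `P` whose tuple of best arms
differs from that of `v`. -/
def AltSet (S : Fin M → Finset (Fin K)) (v : Fin M → Fin K → ℝ) :
    Set (Fin M → Fin K → ℝ) :=
  {v' | v' ∈ PSet S ∧ ¬ ∀ (m : Fin M) (i : Fin K), isBest S v m i ↔ isBest S v' m i}

/-- The set `Γ` of allocations: families `(ω_{i,m})_{m, i ∈ S_m}` of nonnegative weights
summing to one for each client (represented as functions vanishing off the support). -/
def Gam (S : Fin M → Finset (Fin K)) : Set (Fin M → Fin K → ℝ) :=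
  {ω | (∀ m, ∀ i ∈ S m, 0 ≤ ω m i) ∧ (∀ m, ∑ i ∈ S m, ω m i = 1) ∧
    ∀ m, ∀ i, i ∉ S m → ω m i = 0}

/-- `g_v(ω)`, the inner infimum over alternative instances. -/
def gfun (S : Fin M → Finset (Fin K)) (v ω : Fin M → Fin K → ℝ) : ℝ :=
  sInf {x | ∃ v' ∈ AltSet S v,
    x = ∑ m : Fin M, ∑ i ∈ S m, ω m i * (v m i - v' m i) ^ 2 / 2}

/-- The gap `Δ_i(v)`. -/
def Delta (S : Fin M → Finset (Fin K)) (v : Fin M → Fin K → ℝ) (i : Fin K) : ℝ :=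
  sInf {x | ∃ m : Fin M, i ∈ S m ∧
    x = |armMean S v i - sSup {y | ∃ j ∈ S m, j ≠ i ∧ y = armMean S v j}|}

/-- The denominator `(1/M_i²) ∑_{m : i ∈ S_m} 1/ω_{i,m}`. -/
def armDenom (S : Fin M → Finset (Fin K)) (ω : Fin M → Fin K → ℝ) (i : Fin K) : ℝ :=
  (1 / (Mi S i : ℝ) ^ 2) * ∑ m ∈ Finset.univ.filter (fun m => i ∈ S m), 1 / ω m i

/-- The simplified objective `g̃_v(ω)`. -/
def gtilde (S : Fin M → Finset (Fin K)) (v ω : Fin M → Fin K → ℝ) : ℝ :=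
  if ∃ m, ∃ i ∈ S m, ω m i = 0 then 0
  else sInf {x | ∃ i : Fin K, x = (Delta S v i) ^ 2 / 2 / armDenom S ω i}

/-- The relation `R` on arms: two arms are related if some client has access to both. -/
def armRel (S : Fin M → Finset (Fin K)) (i₁ i₂ : Fin K) : Prop :=
  ∃ m, i₁ ∈ S m ∧ i₂ ∈ S m

/-- The equivalence class `Q` of arm `i` under the smallest equivalence relation
containing `R`. -/
def armClass (S : Fin M → Finset (Fin K)) (i : Fin K) : Set (Fin K) :=
  {i' | Relation.EqvGen (armRel S) i i'}

/-- Same equivalence class, as a `Finset`. -/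
def classFinset (S : Fin M → Finset (Fin K)) (i : Fin K) : Finset (Fin K) :=
  Finset.univ.filter fun i' => Relation.EqvGen (armRel S) i i'

/-- The per-class objective `g̃_v^{(j)}(ω)` where `Q` is the `j`-th equivalence class. -/
def gtildeC (S : Fin M → Finset (Fin K)) (v : Fin M → Fin K → ℝ) (Q : Set (Fin K))
    (ω : Fin M → Fin K → ℝ) : ℝ :=
  if ∃ m, ∃ i ∈ S m, i ∈ Q ∧ ω m i = 0 then 0
  else sInf {x | ∃ i ∈ Q, x = (Delta S v i) ^ 2 / armDenom S ω i}

/-- `ω` is a common solution: it simultaneously attains `max_{ω'∈Γ} g̃_v(ω')` and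
`max_{ω'∈Γ} g̃_v^{(j)}(ω')` for every equivalence class `Q_j`. -/
def IsCommonSol (S : Fin M → Finset (Fin K)) (v ω : Fin M → Fin K → ℝ) : Prop :=
  ω ∈ Gam S ∧ (∀ ω' ∈ Gam S, gtilde S v ω' ≤ gtilde S v ω) ∧
    ∀ i : Fin K, ∀ ω' ∈ Gam S,
      gtildeC S v (armClass S i) ω' ≤ gtildeC S v (armClass S i) ω

/-- The balanced condition. -/
def BalancedCond (S : Fin M → Finset (Fin K)) (ω : Fin M → Fin K → ℝ) : Prop :=
  ∀ m₁ m₂ : Fin M, ∀ i₁ i₂ : Fin K, i₁ ∈ S m₁ → i₂ ∈ S m₁ → i₁ ∈ S m₂ → i₂ ∈ S m₂ →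
    ω m₁ i₁ / ω m₁ i₂ = ω m₂ i₁ / ω m₂ i₂

/-- The pseudo-balanced condition for instance `v`. -/
def PseudoBalancedCond (S : Fin M → Finset (Fin K)) (v ω : Fin M → Fin K → ℝ) : Prop :=
  ∀ i₁ i₂ : Fin K, Relation.EqvGen (armRel S) i₁ i₂ →
    (Delta S v i₁) ^ 2 / armDenom S ω i₁ = (Delta S v i₂) ^ 2 / armDenom S ω i₂

/-- The matrix `H(v)` (restricted to a class it gives `H^{(j)}(v)`). -/
def Hmat (S : Fin M → Finset (Fin K)) (v : Fin M → Fin K → ℝ) (i₁ i₂ : Fin K) : ℝ :=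
  (1 / ((Delta S v i₁) ^ 2 * (Mi S i₁ : ℝ) ^ 2)) *
    ((Finset.univ.filter fun m => i₁ ∈ S m ∧ i₂ ∈ S m).card : ℝ)

set_option maxHeartbeats 2000000

lemma Mi_pos (S : Fin M → Finset (Fin K)) {i : Fin K} (h : ∃ m, i ∈ S m) : 0 < Mi S i := by
  obtain ⟨m, hm⟩ := h
  exact Finset.card_pos.mpr ⟨m, Finset.mem_filter.mpr ⟨Finset.mem_univ m, hm⟩⟩

lemma armMean_const (S : Fin M → Finset (Fin K)) (c : Fin K → ℝ) {i : Fin K}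
    (h : ∃ m, i ∈ S m) : armMean S (fun _ j => c j) i = c i := by
  have hpos : (0:ℝ) < (Mi S i : ℝ) := by exact_mod_cast Mi_pos S h
  rw [armMean, Finset.sum_const, nsmul_eq_mul]
  rw [show ((Finset.univ.filter fun m => i ∈ S m).card : ℝ) = (Mi S i : ℝ) from rfl]
  field_simp

lemma pset_of_inj (S : Fin M → Finset (Fin K)) (w : Fin M → Fin K → ℝ)
    (f : Fin K → ℝ) (hf : ∀ i, armMean S w i = f i) (hinj : Function.Injective f)
    (hne : ∀ m, (S m).Nonempty) : w ∈ PSet S := by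
  intro m
  obtain ⟨i, hi, hmax⟩ := Finset.exists_max_image (S m) f (hne m)
  exact ⟨i, hi, fun j hj hj' => by
    rw [hf, hf]; exact lt_of_le_of_ne (hmax j hj) fun h => hj' (hinj h)⟩

/-- Lemma 4: the instance `v†(ρ)` with means `μ_(i,m) = i/√ρ` lies in `P` and its hardness
constant `c*(v†(ρ))` satisfies `4ρ/(MK²) ≤ c*(v†(ρ)) ≤ 4Kρ`. -/
theorem stmt13 (K M : ℕ) (hK : 2 ≤ K) (hM : 1 ≤ M) (S : Fin M → Finset (Fin K))
    (hS : ∀ m, 2 ≤ (S m).card) (hcov : ∀ i : Fin K, ∃ m, i ∈ S m)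
    (ρ : ℝ) (hρ : 0 < ρ) :
    (fun (_ : Fin M) (i : Fin K) => ((i : ℕ) + 1 : ℝ) / Real.sqrt ρ) ∈ PSet S ∧
    4 * ρ / ((M : ℝ) * (K : ℝ) ^ 2) ≤
      (sSup {x | ∃ ω ∈ Gam S,
        x = gfun S (fun (_ : Fin M) (i : Fin K) => ((i : ℕ) + 1 : ℝ) / Real.sqrt ρ) ω})⁻¹ ∧
    (sSup {x | ∃ ω ∈ Gam S,
        x = gfun S (fun (_ : Fin M) (i : Fin K) => ((i : ℕ) + 1 : ℝ) / Real.sqrt ρ) ω})⁻¹ ≤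
      4 * (K : ℝ) * ρ := by
  classical
  have hKpos : (0:ℝ) < (K:ℝ) := by
    have : 0 < K := by omega
    exact_mod_cast this
  have hMpos : (0:ℝ) < (M:ℝ) := by
    have : 0 < M := by omega
    exact_mod_cast this
  set sρ := Real.sqrt ρ with hsρdef
  have hsρ : 0 < sρ := Real.sqrt_pos.mpr hρ
  have hsρ2 : sρ ^ 2 = ρ := Real.sq_sqrt hρ.le
  set v : Fin M → Fin K → ℝ := fun (_ : Fin M) (i : Fin K) => ((i : ℕ) + 1 : ℝ) / sρ
    with hvdef
  have hSne : ∀ m, (S m).Nonempty := fun m =>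
    Finset.card_pos.mp (lt_of_lt_of_le Nat.zero_lt_two (hS m))
  have hvmean : ∀ i, armMean S v i = ((i:ℕ) + 1 : ℝ) / sρ := fun i =>
    armMean_const S (fun j => ((j:ℕ) + 1 : ℝ) / sρ) (hcov i)
  have hvinj : Function.Injective (fun i : Fin K => ((i:ℕ) + 1 : ℝ) / sρ) := by
    intro i j h
    simp only [div_eq_div_iff hsρ.ne' hsρ.ne'] at h
    have h2 : ((i:ℕ):ℝ) = ((j:ℕ):ℝ) := by
      have := mul_right_cancel₀ hsρ.ne' h
      linarith
    exact Fin.ext (by exact_mod_cast h2)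
  have hvP : v ∈ PSet S := pset_of_inj S v _ hvmean hvinj hSne
  -- the alternative instance v'
  set m0 : Fin M := ⟨0, hM⟩ with hm0def
  set a : Fin K := (S m0).max' (hSne m0) with hadef
  have ha : a ∈ S m0 := Finset.max'_mem _ _
  obtain ⟨b, hb, hbne⟩ := Finset.exists_mem_ne
    (lt_of_lt_of_le Nat.one_lt_two (hS m0)) a
  have hab : a ≠ b := hbne.symm
  set F : Fin K → ℕ := fun i =>
    if i = a then 2*(a:ℕ)+2*(b:ℕ)+3 else if i = b then 2*(a:ℕ)+2*(b:ℕ)+5 else 4*(i:ℕ)+4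
    with hFdef
  have hFa : F a = 2*(a:ℕ)+2*(b:ℕ)+3 := by simp [hFdef]
  have hFb : F b = 2*(a:ℕ)+2*(b:ℕ)+5 := by simp [hFdef, hbne]
  have hFo : ∀ i, i ≠ a → i ≠ b → F i = 4*(i:ℕ)+4 := fun i h1 h2 => by
    simp [hFdef, h1, h2]
  have hFinj : Function.Injective F := by
    intro i j h
    by_cases hia : i = a
    · by_cases hja : j = a
      · rw [hia, hja]
      · by_cases hjb : j = b
        · rw [hia, hFa, hjb, hFb] at h; exact absurd h (by omega)
        · rw [hia, hFa, hFo j hja hjb] at h; exact absurd h (by omega)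
    · by_cases hib : i = b
      · by_cases hja : j = a
        · rw [hib, hFb, hja, hFa] at h; exact absurd h (by omega)
        · by_cases hjb : j = b
          · rw [hib, hjb]
          · rw [hib, hFb, hFo j hja hjb] at h; exact absurd h (by omega)
      · by_cases hja : j = a
        · rw [hFo i hia hib, hja, hFa] at h; exact absurd h (by omega)
        · by_cases hjb : j = b
          · rw [hFo i hia hib, hjb, hFb] at h; exact absurd h (by omega)
          · rw [hFo i hia hib, hFo j hja hjb] at h
            exact Fin.ext (by omega)
  set v' : Fin M → Fin K → ℝ := fun _ i => (F i : ℝ) / (4*sρ) with hv'def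
  have h4sρ : (0:ℝ) < 4*sρ := by positivity
  have hv'mean : ∀ i, armMean S v' i = (F i : ℝ) / (4*sρ) := fun i =>
    armMean_const S (fun j => (F j : ℝ) / (4*sρ)) (hcov i)
  have hv'inj : Function.Injective (fun i : Fin K => (F i : ℝ) / (4*sρ)) := by
    intro i j h
    simp only [div_eq_div_iff h4sρ.ne' h4sρ.ne'] at h
    have h2 : (F i : ℝ) = (F j : ℝ) := mul_right_cancel₀ h4sρ.ne' h
    exact hFinj (by exact_mod_cast h2)
  have hv'P : v' ∈ PSet S := pset_of_inj S v' _ hv'mean hv'inj hSne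
  have hbest_va : isBest S v m0 a := by
    refine ⟨ha, fun j hj hjne => ?_⟩
    rw [hvmean, hvmean]
    have hjle : (j:ℕ) ≤ (a:ℕ) := Finset.le_max' _ j hj
    have hjlt : (j:ℕ) < (a:ℕ) := lt_of_le_of_ne hjle (fun h => hjne (Fin.ext h))
    have : ((j:ℕ):ℝ) + 1 < ((a:ℕ):ℝ) + 1 := by
      have : ((j:ℕ):ℝ) < ((a:ℕ):ℝ) := by exact_mod_cast hjlt
      linarith
    exact div_lt_div_of_pos_right this hsρ
  have hv'alt : v' ∈ AltSet S v := by
    refine ⟨hv'P, fun hall => ?_⟩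
    have h1 : isBest S v' m0 a := (hall m0 a).mp hbest_va
    have h2 := h1.2 b hb hbne
    rw [hv'mean, hv'mean, hFa, hFb] at h2
    have h3 := mul_lt_mul_of_pos_right h2 h4sρ
    rw [div_mul_cancel₀ _ h4sρ.ne', div_mul_cancel₀ _ h4sρ.ne'] at h3
    have h4 : (2*(a:ℕ)+2*(b:ℕ)+5 : ℕ) < (2*(a:ℕ)+2*(b:ℕ)+3 : ℕ) := by exact_mod_cast h3
    omega
  -- squared-difference bound for v vs v'
  have hdiffsq : ∀ (i : Fin K) (m : Fin M), (v m i - v' m i)^2 ≤ (K:ℝ)^2/(4*ρ) := by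
    intro i m
    have haK : ((a:ℕ):ℝ) + 1 ≤ (K:ℝ) := by exact_mod_cast a.isLt
    have hbK : ((b:ℕ):ℝ) + 1 ≤ (K:ℝ) := by exact_mod_cast b.isLt
    have hiK : ((i:ℕ):ℝ) + 1 ≤ (K:ℝ) := by exact_mod_cast i.isLt
    have hanneg : (0:ℝ) ≤ ((a:ℕ):ℝ) := Nat.cast_nonneg _
    have hbnneg : (0:ℝ) ≤ ((b:ℕ):ℝ) := Nat.cast_nonneg _
    have hval : v m i - v' m i = ((4*(((i:ℕ):ℝ)+1)) - (F i:ℝ))/(4*sρ) := by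
      show ((i:ℕ) + 1 : ℝ)/sρ - (F i : ℝ)/(4*sρ) = _
      field_simp
    have hx2 : ((4*(((i:ℕ):ℝ)+1)) - (F i:ℝ))^2 ≤ 4*(K:ℝ)^2 := by
      rcases eq_or_ne i a with rfl | hia
      · rw [hFa]; push_cast; nlinarith
      · rcases eq_or_ne i b with rfl | hib
        · rw [hFb]; push_cast; nlinarith
        · rw [hFo i hia hib]; push_cast; nlinarith
    calc (v m i - v' m i)^2 = ((4*(((i:ℕ):ℝ)+1)) - (F i:ℝ))^2/(16*ρ) := by
          rw [hval, div_pow]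
          congr 1
          rw [mul_pow, hsρ2]; norm_num
      _ ≤ (4*(K:ℝ)^2)/(16*ρ) := by gcongr
      _ = (K:ℝ)^2/(4*ρ) := by ring
  -- upper bound on gfun for every allocation
  have gfun_le : ∀ ω ∈ Gam S, gfun S v ω ≤ (M:ℝ) * (K:ℝ)^2 / (4*ρ) := by
    intro ω hω
    have hBdd : BddBelow {x | ∃ v'' ∈ AltSet S v,
        x = ∑ m : Fin M, ∑ i ∈ S m, ω m i * (v m i - v'' m i)^2/2} := by
      refine ⟨0, fun x hx => ?_⟩
      obtain ⟨v'', _, rfl⟩ := hx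
      exact Finset.sum_nonneg fun m _ => Finset.sum_nonneg fun i hi =>
        div_nonneg (mul_nonneg (hω.1 m i hi) (sq_nonneg _)) two_pos.le
    refine le_trans (csInf_le hBdd ⟨v', hv'alt, rfl⟩) ?_
    calc ∑ m : Fin M, ∑ i ∈ S m, ω m i * (v m i - v' m i)^2/2
        ≤ ∑ m : Fin M, (K:ℝ)^2/(4*ρ) := by
          refine Finset.sum_le_sum fun m _ => ?_
          calc ∑ i ∈ S m, ω m i * (v m i - v' m i)^2/2
              ≤ ∑ i ∈ S m, ω m i * ((K:ℝ)^2/(4*ρ)) := by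
                refine Finset.sum_le_sum fun i hi => ?_
                have h1 := hdiffsq i m
                have h2 := hω.1 m i hi
                have h3 : (0:ℝ) ≤ (v m i - v' m i)^2 := sq_nonneg _
                have h4 : (0:ℝ) ≤ (K:ℝ)^2/(4*ρ) := by positivity
                nlinarith
            _ = (∑ i ∈ S m, ω m i) * ((K:ℝ)^2/(4*ρ)) := (Finset.sum_mul _ _ _).symm
            _ = (K:ℝ)^2/(4*ρ) := by rw [hω.2.1 m, one_mul]
      _ = (M:ℝ) * ((K:ℝ)^2/(4*ρ)) := by
          rw [Finset.sum_const, Finset.card_univ, Fintype.card_fin, nsmul_eq_mul]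
      _ = (M:ℝ) * (K:ℝ)^2 / (4*ρ) := by ring
  -- the uniform allocation
  set ω₀ : Fin M → Fin K → ℝ := fun m i => if i ∈ S m then ((S m).card : ℝ)⁻¹ else 0
    with hω₀def
  have hcard_pos : ∀ m, (0:ℝ) < ((S m).card : ℝ) := fun m => by
    exact_mod_cast lt_of_lt_of_le Nat.zero_lt_two (hS m)
  have hω₀Gam : ω₀ ∈ Gam S := by
    refine ⟨fun m i hi => ?_, fun m => ?_, fun m i hi => by simp [hω₀def, hi]⟩
    · simp only [hω₀def, if_pos hi]
      positivity
    · rw [Finset.sum_congr rfl (fun i hi => show ω₀ m i = ((S m).card : ℝ)⁻¹ by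
        simp [hω₀def, hi])]
      rw [Finset.sum_const, nsmul_eq_mul, mul_inv_cancel₀ (hcard_pos m).ne']
  have hω₀nn : ∀ m i, 0 ≤ ω₀ m i := fun m i => by
    by_cases h : i ∈ S m
    · exact hω₀Gam.1 m i h
    · exact le_of_eq (hω₀Gam.2.2 m i h).symm
  -- Cauchy-Schwarz per arm
  have hCS : ∀ (v'' : Fin M → Fin K → ℝ) (i : Fin K),
      (armMean S v i - armMean S v'' i)^2 ≤
      ∑ m ∈ Finset.univ.filter (fun m => i ∈ S m), (v m i - v'' m i)^2 := by
    intro v'' i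
    have hni : 0 < Mi S i := Mi_pos S (hcov i)
    have hnir : (0:ℝ) < (Mi S i : ℝ) := by exact_mod_cast hni
    have hsum : armMean S v i - armMean S v'' i =
        (1/(Mi S i:ℝ)) * ∑ m ∈ Finset.univ.filter (fun m => i ∈ S m), (v m i - v'' m i) := by
      rw [armMean, armMean, Finset.sum_sub_distrib]
      ring
    have hcs := sq_sum_le_card_mul_sum_sq
      (s := Finset.univ.filter (fun m : Fin M => i ∈ S m)) (f := fun m => v m i - v'' m i)
    have hcard : (((Finset.univ.filter (fun m : Fin M => i ∈ S m)).card : ℕ) : ℝ)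
        = (Mi S i : ℝ) := rfl
    rw [hcard] at hcs
    rw [hsum]
    calc ((1/(Mi S i:ℝ)) * ∑ m ∈ Finset.univ.filter (fun m => i ∈ S m), (v m i - v'' m i))^2
        = (∑ m ∈ Finset.univ.filter (fun m => i ∈ S m), (v m i - v'' m i))^2
            / (Mi S i:ℝ)^2 := by
          ring
      _ ≤ ((Mi S i:ℝ) * ∑ m ∈ Finset.univ.filter (fun m => i ∈ S m), (v m i - v'' m i)^2)
            / (Mi S i:ℝ)^2 := by gcongr
      _ = (∑ m ∈ Finset.univ.filter (fun m => i ∈ S m), (v m i - v'' m i)^2) / (Mi S i:ℝ) := by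
          rw [pow_two, mul_div_mul_left _ _ hnir.ne']
      _ ≤ ∑ m ∈ Finset.univ.filter (fun m => i ∈ S m), (v m i - v'' m i)^2 := by
          apply div_le_self (Finset.sum_nonneg fun m _ => sq_nonneg _)
          exact_mod_cast hni
  -- lower bound for gfun at the uniform allocation
  have hω₀lb : 1/(4*(K:ℝ)*ρ) ≤ gfun S v ω₀ := by
    refine le_csInf ⟨_, v', hv'alt, rfl⟩ ?_
    rintro x ⟨v'', ⟨hv''P, hnot⟩, rfl⟩
    have hex : ∃ m1 i1, ¬ (isBest S v m1 i1 ↔ isBest S v'' m1 i1) := by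
      by_contra hcon
      push_neg at hcon
      exact hnot fun m i => hcon m i
    obtain ⟨m1, i1, hni⟩ := hex
    obtain ⟨a1, b1, hA, hB, hne1⟩ :
        ∃ a1 b1, isBest S v m1 a1 ∧ isBest S v'' m1 b1 ∧ a1 ≠ b1 := by
      by_cases h1 : isBest S v m1 i1
      · have h2 : ¬ isBest S v'' m1 i1 := fun h => hni ⟨fun _ => h, fun _ => h1⟩
        obtain ⟨j, hj⟩ := hv''P m1
        exact ⟨i1, j, h1, hj, fun he => h2 (he ▸ hj)⟩
      · have h2 : isBest S v'' m1 i1 := by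
          by_contra h2
          exact hni ⟨fun h => absurd h h1, fun h => absurd h h2⟩
        obtain ⟨j, hj⟩ := hvP m1
        exact ⟨j, i1, hj, h2, fun he => h1 (he ▸ hj)⟩
    have ha1 : a1 ∈ S m1 := hA.1
    have hb1 : b1 ∈ S m1 := hB.1
    have hlt1 : armMean S v b1 < armMean S v a1 := hA.2 b1 hb1 (Ne.symm hne1)
    have hlt2 : armMean S v'' a1 < armMean S v'' b1 := hB.2 a1 ha1 hne1
    -- gap at least 1/sρ
    have hblta : (b1:ℕ) + 1 ≤ (a1:ℕ) := by
      rw [hvmean, hvmean, div_lt_div_iff₀ hsρ hsρ] at hlt1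
      have h5 : ((b1:ℕ):ℝ) + 1 < ((a1:ℕ):ℝ) + 1 := by
        have := (mul_lt_mul_iff_of_pos_right hsρ).mp hlt1
        linarith
      have h6 : ((b1:ℕ):ℝ) < ((a1:ℕ):ℝ) := by linarith
      exact_mod_cast (by exact_mod_cast h6 : (b1:ℕ) < (a1:ℕ))
    have hgap : 1/sρ ≤ armMean S v a1 - armMean S v b1 := by
      rw [hvmean, hvmean, div_sub_div_same]
      have hc : ((b1:ℕ):ℝ) + 1 ≤ ((a1:ℕ):ℝ) := by exact_mod_cast hblta
      gcongr
      linarith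
    set Da := armMean S v a1 - armMean S v'' a1 with hDadef
    set Db := armMean S v b1 - armMean S v'' b1 with hDbdef
    have hDaDb : 1/sρ < Da - Db := by
      have : Da - Db = (armMean S v a1 - armMean S v b1)
          + (armMean S v'' b1 - armMean S v'' a1) := by ring
      rw [this]
      have h7 : 0 < armMean S v'' b1 - armMean S v'' a1 := by linarith
      linarith
    have h5 : 1 < (Da - Db) * sρ := (div_lt_iff₀ hsρ).mp hDaDb
    have h6 : ((Da - Db) * sρ)^2 = (Da - Db)^2 * ρ := by rw [mul_pow, hsρ2]
    have h7 : 1 < (Da - Db)^2 * ρ := by nlinarith [sq_nonneg ((Da - Db) * sρ - 1)]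
    have hDsq : 1 < 2*ρ*(Da^2 + Db^2) := by
      nlinarith [mul_nonneg hρ.le (sq_nonneg (Da + Db))]
    -- assemble the sum lower bound
    have hswap : (∑ m : Fin M, ∑ i ∈ S m, ω₀ m i * (v m i - v'' m i)^2/2)
        = ∑ i : Fin K, ∑ m ∈ Finset.univ.filter (fun m => i ∈ S m),
            ω₀ m i * (v m i - v'' m i)^2/2 := by
      calc ∑ m : Fin M, ∑ i ∈ S m, ω₀ m i * (v m i - v'' m i)^2/2
          = ∑ m : Fin M, ∑ i : Fin K,
              if i ∈ S m then ω₀ m i * (v m i - v'' m i)^2/2 else 0 := by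
            refine Finset.sum_congr rfl fun m _ => ?_
            rw [Finset.sum_ite_mem, Finset.univ_inter]
        _ = ∑ i : Fin K, ∑ m : Fin M,
              if i ∈ S m then ω₀ m i * (v m i - v'' m i)^2/2 else 0 := Finset.sum_comm
        _ = ∑ i : Fin K, ∑ m ∈ Finset.univ.filter (fun m => i ∈ S m),
              ω₀ m i * (v m i - v'' m i)^2/2 := by
            refine Finset.sum_congr rfl fun i _ => (Finset.sum_filter _ _).symm
    have hTnn : ∀ i : Fin K, 0 ≤ ∑ m ∈ Finset.univ.filter (fun m => i ∈ S m),
        ω₀ m i * (v m i - v'' m i)^2/2 := fun i =>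
      Finset.sum_nonneg fun m _ =>
        div_nonneg (mul_nonneg (hω₀nn m i) (sq_nonneg _)) two_pos.le
    have hTlb : ∀ i : Fin K, (K:ℝ)⁻¹ * ((armMean S v i - armMean S v'' i)^2/2)
        ≤ ∑ m ∈ Finset.univ.filter (fun m => i ∈ S m),
            ω₀ m i * (v m i - v'' m i)^2/2 := by
      intro i
      calc (K:ℝ)⁻¹ * ((armMean S v i - armMean S v'' i)^2/2)
          ≤ (K:ℝ)⁻¹ * ((∑ m ∈ Finset.univ.filter (fun m => i ∈ S m),
              (v m i - v'' m i)^2)/2) := by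
            have := hCS v'' i
            gcongr
        _ = ∑ m ∈ Finset.univ.filter (fun m => i ∈ S m),
              (K:ℝ)⁻¹ * ((v m i - v'' m i)^2/2) := by
            rw [Finset.sum_div, Finset.mul_sum]
        _ ≤ ∑ m ∈ Finset.univ.filter (fun m => i ∈ S m),
              ω₀ m i * (v m i - v'' m i)^2/2 := by
            refine Finset.sum_le_sum fun m hm => ?_
            have him : i ∈ S m := (Finset.mem_filter.mp hm).2
            have hωeq : ω₀ m i = ((S m).card : ℝ)⁻¹ := by simp [hω₀def, him]
            have hcardK : ((S m).card : ℝ) ≤ (K:ℝ) := by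
              have h8 : (S m).card ≤ K := by
                have := Finset.card_le_univ (S m)
                simpa using this
              exact_mod_cast h8
            have h9 : (K:ℝ)⁻¹ ≤ ((S m).card : ℝ)⁻¹ :=
              inv_anti₀ (hcard_pos m) hcardK
            rw [hωeq]
            have h10 : (0:ℝ) ≤ (v m i - v'' m i)^2/2 := by positivity
            calc (K:ℝ)⁻¹ * ((v m i - v'' m i)^2/2)
                ≤ ((S m).card : ℝ)⁻¹ * ((v m i - v'' m i)^2/2) :=
                  mul_le_mul_of_nonneg_right h9 h10
              _ = ((S m).card : ℝ)⁻¹ * (v m i - v'' m i)^2/2 := by ring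
    have hpair := Finset.sum_le_sum_of_subset_of_nonneg
      (Finset.subset_univ ({a1, b1} : Finset (Fin K))) (fun i _ _ => hTnn i)
    rw [Finset.sum_pair hne1] at hpair
    have hfinal : 1/(4*(K:ℝ)*ρ) ≤ (K:ℝ)⁻¹ * (Da^2/2) + (K:ℝ)⁻¹ * (Db^2/2) := by
      have heq : (K:ℝ)⁻¹ * (Da^2/2) + (K:ℝ)⁻¹ * (Db^2/2) = (Da^2 + Db^2)/(2*(K:ℝ)) := by
        ring
      rw [heq, div_le_div_iff₀ (by positivity) (by positivity)]
      nlinarith [mul_le_mul_of_nonneg_right hDsq.le (by positivity : (0:ℝ) ≤ 2*(K:ℝ))]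
    calc 1/(4*(K:ℝ)*ρ) ≤ (K:ℝ)⁻¹ * (Da^2/2) + (K:ℝ)⁻¹ * (Db^2/2) := hfinal
      _ ≤ (∑ m ∈ Finset.univ.filter (fun m => a1 ∈ S m), ω₀ m a1 * (v m a1 - v'' m a1)^2/2)
          + (∑ m ∈ Finset.univ.filter (fun m => b1 ∈ S m),
              ω₀ m b1 * (v m b1 - v'' m b1)^2/2) :=
        add_le_add (hTlb a1) (hTlb b1)
      _ ≤ ∑ i : Fin K, ∑ m ∈ Finset.univ.filter (fun m => i ∈ S m),
            ω₀ m i * (v m i - v'' m i)^2/2 := hpair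
      _ = ∑ m : Fin M, ∑ i ∈ S m, ω₀ m i * (v m i - v'' m i)^2/2 := hswap.symm
  -- put everything together
  set SS := {x | ∃ ω ∈ Gam S, x = gfun S v ω} with hSSdef
  have hSS_ub : ∀ x ∈ SS, x ≤ (M:ℝ) * (K:ℝ)^2 / (4*ρ) := by
    rintro x ⟨ω, hω, rfl⟩
    exact gfun_le ω hω
  have hSSne : gfun S v ω₀ ∈ SS := ⟨ω₀, hω₀Gam, rfl⟩
  have hbdd : BddAbove SS := ⟨_, fun x hx => hSS_ub x hx⟩
  have hsup_ub : sSup SS ≤ (M:ℝ) * (K:ℝ)^2 / (4*ρ) := csSup_le ⟨_, hSSne⟩ hSS_ub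
  have hsup_lb : 1/(4*(K:ℝ)*ρ) ≤ sSup SS := le_trans hω₀lb (le_csSup hbdd hSSne)
  have hsup_pos : 0 < sSup SS := lt_of_lt_of_le (by positivity) hsup_lb
  refine ⟨hvP, ?_, ?_⟩
  · have h1 : ((M:ℝ) * (K:ℝ)^2 / (4*ρ))⁻¹ ≤ (sSup SS)⁻¹ :=
      inv_anti₀ hsup_pos hsup_ub
    calc 4 * ρ / ((M:ℝ) * (K:ℝ)^2) = ((M:ℝ) * (K:ℝ)^2 / (4*ρ))⁻¹ := by
          rw [inv_div]
      _ ≤ (sSup SS)⁻¹ := h1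
  · have h1 : (sSup SS)⁻¹ ≤ (1/(4*(K:ℝ)*ρ))⁻¹ :=
      inv_anti₀ (by positivity) hsup_lb
    calc (sSup SS)⁻¹ ≤ (1/(4*(K:ℝ)*ρ))⁻¹ := h1
      _ = 4*(K:ℝ)*ρ := by rw [one_div, inv_inv]

end

end HetTS
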